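/- arXiv:1201.1483 — 7 statements merged into one kernel-verified Lean document; each statement's English description precedes it below -/
import Mathlib

section
/- Let (R_t) be a dynamic risk measure with acceptance sets A_t, and assume M_t ⊆ M_{t+s}. If A_t ⊆ A_{t+s} + A_{t,t+s}^{M_{t+s}}, then for all X ∈ L^p_d(F_T): R_t(X) ⊆ ∪_{Z ∈ R_{t+s}(X)} R_t(−Z). Conversely, if R_t(X) ⊆ ∪_{Z ∈ R_{t+s}(X)} R_t(−Z) for all X, then A_t ⊆ A_{t+s} + A_{t,t+s}^{M_{t+s}} (no inclusion of eligible sets needed for this direction). -/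
open MeasureTheory Set Pointwise ENNReal
noncomputable section

/-- Portfolio vectors in `ℝ^d` (with the sup norm coming from the Pi instance). -/
abbrev Ed (d : ℕ) := Fin d → ℝ

variable {Ω : Type*} {m0 : MeasurableSpace Ω}

/-- The a.s. componentwise-nonnegative cone `L^p_d(F_T)_+`. -/
def LposT (μ : Measure Ω) (p : ℝ≥0∞) (d : ℕ) : Set (Lp (Ed d) p μ) :=
  {X | ∀ᵐ ω ∂μ, 0 ≤ X ω}

/-- A conditional risk measure with eligible portfolios `M`:
it maps into `P(M;M_+)`, is `M`-translative, `L^p_+`-monotone and finite at zero. -/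
def IsCondRM (μ : Measure Ω) (p : ℝ≥0∞) (d : ℕ)
    (M : Set (Lp (Ed d) p μ)) (R : Lp (Ed d) p μ → Set (Lp (Ed d) p μ)) : Prop :=
  (∀ X, R X ⊆ M) ∧
  (∀ X, R X + (M ∩ LposT μ p d) = R X) ∧
  (∀ X, ∀ m ∈ M, R (X + m) = (fun u => u - m) '' R X) ∧
  (∀ X Y, Y - X ∈ LposT μ p d → R X ⊆ R Y) ∧
  (R 0).Nonempty ∧ R 0 ≠ M

/-! Both inclusions come from translativity alone: for `m` eligible, `m ∈ R X` iff
`X + m` is acceptable. Given `U ∈ R_t(X)`, split the acceptable position `X + U = Y + W`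
with `Y ∈ A_{t+s}`, `W ∈ A_t ∩ M_{t+s}`; then `Z := U - W ∈ R_{t+s}(X)` and
`U ∈ R_t(-Z)`. Conversely, an acceptable `X` with `Z ∈ R_{t+s}(X)`, `0 ∈ R_t(-Z)`
splits as `X = (X + Z) + (-Z)`. -/

namespace RiskMeasure

variable {G : Type*} [AddCommGroup G]

def IsTranslative (M : Set G) (R : G → Set G) : Prop :=
  ∀ X, ∀ m ∈ M, R (X + m) = (fun u => u - m) '' R X

def acceptanceSet (R : G → Set G) : Set G := {X | 0 ∈ R X}

variable {M : Set G} {R : G → Set G}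

namespace IsTranslative

theorem sub_mem_add_iff (hR : IsTranslative M R) {X u m : G} (hm : m ∈ M) :
    u - m ∈ R (X + m) ↔ u ∈ R X := by
  rw [hR X m hm]
  exact sub_left_injective.mem_set_image

theorem zero_mem_add_iff (hR : IsTranslative M R) {X m : G} (hm : m ∈ M) :
    0 ∈ R (X + m) ↔ m ∈ R X := by
  simpa using hR.sub_mem_add_iff (u := m) hm

theorem neg_mem_add_iff (hR : IsTranslative M R) {X m : G} (hm : m ∈ M) :
    -m ∈ R (X + m) ↔ 0 ∈ R X := by
  simpa using hR.sub_mem_add_iff (u := 0) hm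

/-- Translating `Z' ∈ R(-Z)` first by `Z`, then by `Z'`, exhibits `-Z` as a value of `R`. -/
theorem neg_mem_of_nonempty (hR : IsTranslative M R) (hRM : ∀ X, R X ⊆ M) {Z : G}
    (hZ : Z ∈ M) (hne : (R (-Z)).Nonempty) : -Z ∈ M := by
  obtain ⟨Z', hZ'⟩ := hne
  have h₀ : Z' - Z ∈ R 0 := by
    simpa using (hR.sub_mem_add_iff (X := -Z) hZ).2 hZ'
  have h₁ : (Z' - Z) - Z' ∈ R (0 + Z') := (hR.sub_mem_add_iff (hRM _ hZ')).2 h₀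
  simpa using hRM _ h₁

end IsTranslative

variable {M₁ M₂ : Set G} {R₁ R₂ : G → Set G}

theorem subset_biUnion_of_acceptanceSet_subset (h₁ : IsTranslative M₁ R₁)
    (hRM₁ : ∀ X, R₁ X ⊆ M₁) (h₂ : IsTranslative M₂ R₂) (hM : M₁ ⊆ M₂)
    (hA : acceptanceSet R₁ ⊆ acceptanceSet R₂ + (acceptanceSet R₁ ∩ M₂)) (X : G) :
    R₁ X ⊆ ⋃ Z ∈ R₂ X, R₁ (-Z) := by
  intro U hU
  have hUM : U ∈ M₁ := hRM₁ X hU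
  obtain ⟨Y, hY, W, ⟨hW, hWM⟩, hYW⟩ := hA ((h₁.zero_mem_add_iff hUM).2 hU)
  have hnegW : -W ∈ R₂ (X + U) := hYW ▸ (h₂.neg_mem_add_iff hWM).2 hY
  have hZ : U - W ∈ R₂ X := (h₂.sub_mem_add_iff (hM hUM)).1 (by simpa using hnegW)
  refine mem_biUnion hZ ((h₁.zero_mem_add_iff hUM).1 ?_)
  rwa [neg_sub, sub_add_cancel]

theorem acceptanceSet_subset_of_subset_biUnion (h₂ : IsTranslative M₂ R₂)
    (hRM₂ : ∀ X, R₂ X ⊆ M₂) (h : ∀ X, R₁ X ⊆ ⋃ Z ∈ R₂ X, R₁ (-Z)) :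
    acceptanceSet R₁ ⊆ acceptanceSet R₂ + (acceptanceSet R₁ ∩ M₂) := by
  intro X hX
  obtain ⟨Z, hZ, hZ₀⟩ := mem_iUnion₂.1 (h X hX)
  have hZM : Z ∈ M₂ := hRM₂ X hZ
  obtain ⟨Z', hZ', -⟩ := mem_iUnion₂.1 (h (-Z) hZ₀)
  have hnegZM : -Z ∈ M₂ := h₂.neg_mem_of_nonempty hRM₂ hZM ⟨Z', hZ'⟩
  exact ⟨X + Z, (h₂.zero_mem_add_iff hZM).2 hZ, -Z, ⟨hZ₀, hnegZM⟩, add_neg_cancel_right X Z⟩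

end RiskMeasure

open RiskMeasure in
theorem acceptance_subset_iff_risk_subset_union_general
    (μ : Measure Ω) (p : ℝ≥0∞) (d : ℕ)
    (T : ℕ)
    (M : ℕ → Set (Lp (Ed d) p μ))
    (R : ℕ → Lp (Ed d) p μ → Set (Lp (Ed d) p μ))
    (hR : ∀ t ≤ T, IsCondRM μ p d (M t) (R t))
    (t s : ℕ) (hts : t + s ≤ T) :
    ((M t ⊆ M (t + s)) →
      {Z | 0 ∈ R t Z} ⊆ {Z | 0 ∈ R (t + s) Z} + ({Z | 0 ∈ R t Z} ∩ M (t + s)) →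
      ∀ X : Lp (Ed d) p μ, R t X ⊆ ⋃ Z ∈ R (t + s) X, R t (-Z)) ∧
    ((∀ X : Lp (Ed d) p μ, R t X ⊆ ⋃ Z ∈ R (t + s) X, R t (-Z)) →
      {Z | 0 ∈ R t Z} ⊆ {Z | 0 ∈ R (t + s) Z} + ({Z | 0 ∈ R t Z} ∩ M (t + s))) := by
  obtain ⟨hRM₁, -, h₁, -⟩ := hR t (le_of_add_le_left hts)
  obtain ⟨hRM₂, -, h₂, -⟩ := hR (t + s) hts
  exact ⟨subset_biUnion_of_acceptanceSet_subset h₁ hRM₁ h₂,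
    acceptanceSet_subset_of_subset_biUnion h₂ hRM₂⟩

/-- with `M_t ⊆ M_{t+s}`, `A_t ⊆ A_{t+s} + A_{t,t+s}^{M_{t+s}}` implies
`R_t(X) ⊆ ⋃_{Z ∈ R_{t+s}(X)} R_t(−Z)`; conversely (without any inclusion of eligible
sets), the latter implies the former. -/
theorem acceptance_subset_iff_risk_subset_union
    (μ : Measure Ω) [IsProbabilityMeasure μ] (p : ℝ≥0∞) [Fact (1 ≤ p)] (d : ℕ)
    (T : ℕ) (F : ℕ → MeasurableSpace Ω) (hFle : ∀ t, F t ≤ m0) (hFmono : Monotone F)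
    (M : ℕ → Set (Lp (Ed d) p μ))
    (hMF : ∀ t ≤ T, M t ⊆ {X | AEStronglyMeasurable[F t] X μ})
    (R : ℕ → Lp (Ed d) p μ → Set (Lp (Ed d) p μ))
    (hR : ∀ t ≤ T, IsCondRM μ p d (M t) (R t))
    (t s : ℕ) (hts : t + s ≤ T) :
    ((M t ⊆ M (t + s)) →
      {Z | 0 ∈ R t Z} ⊆ {Z | 0 ∈ R (t + s) Z} + ({Z | 0 ∈ R t Z} ∩ M (t + s)) →
      ∀ X : Lp (Ed d) p μ, R t X ⊆ ⋃ Z ∈ R (t + s) X, R t (-Z)) ∧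
    ((∀ X : Lp (Ed d) p μ, R t X ⊆ ⋃ Z ∈ R (t + s) X, R t (-Z)) →
      {Z | 0 ∈ R t Z} ⊆ {Z | 0 ∈ R (t + s) Z} + ({Z | 0 ∈ R t Z} ∩ M (t + s))) :=
  acceptance_subset_iff_risk_subset_union_general μ p d T M R hR t s hts
end
end

section
/- Let (R_t) be a dynamic risk measure with acceptance sets A_t, and assume M_t ⊆ M_{t+s}. If A_t ⊇ A_{t+s} + A_{t,t+s}^{M_{t+s}}, then for all X ∈ L^p_d(F_T): R_t(X) ⊇ ∪_{Z ∈ R_{t+s}(X)} R_t(−Z). Conversely, if R_t(X) ⊇ ∪_{Z ∈ R_{t+s}(X)} R_t(−Z) for all X, then A_t ⊇ A_{t+s} + A_{t,t+s}^{M_{t+s}} (no inclusion of eligible sets needed for this direction). -/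
open MeasureTheory Set Pointwise ENNReal
noncomputable section

variable {Ω : Type*} {m0 : MeasurableSpace Ω}

/-!
Translativity gives `m ∈ R X ↔ 0 ∈ R (X + m)` for eligible `m`, so the risk at `X` is read off the
acceptance set. If `Y ∈ R_t(-Z)` with `Z ∈ R_{t+s}(X)`, then `X + Y` splits as `(X + Z) + (Y - Z)`
with `X + Z ∈ A_{t+s}` and `Y - Z ∈ A_t ∩ M_{t+s}`; conversely, for `a ∈ A_{t+s}` and
`m ∈ A_t ∩ M_{t+s}` one has `-m ∈ R_{t+s}(a + m)` and `0 ∈ R_t(m)`.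
-/

section Translative

variable {G : Type*} [AddCommGroup G]

def IsTranslative (M : Set G) (R : G → Set G) : Prop :=
  ∀ X, ∀ m ∈ M, R (X + m) = (fun u => u - m) '' R X

variable {M : Set G} {R : G → Set G}

theorem IsTranslative.mem_add_iff (hR : IsTranslative M R) {X m u : G} (hm : m ∈ M) :
    u ∈ R (X + m) ↔ u + m ∈ R X := by
  rw [hR X m hm]
  constructor
  · rintro ⟨v, hv, rfl⟩
    simpa using hv
  · exact fun h => ⟨u + m, h, add_sub_cancel_right u m⟩

theorem IsTranslative.zero_mem_add_iff (hR : IsTranslative M R) {X m : G} (hm : m ∈ M) :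
    0 ∈ R (X + m) ↔ m ∈ R X := by
  simpa using hR.mem_add_iff (X := X) (u := 0) hm

theorem IsTranslative.risk_sub_mem (hR : IsTranslative M R) (hRM : ∀ X, R X ⊆ M) {X a m : G}
    (ha : a ∈ R X) (hm : m ∈ M) : a - m ∈ M :=
  hRM (X + m) ((hR.mem_add_iff hm).2 (by simpa using ha))

-- `M` need not be closed under subtraction: translating by `Z - Y` and then by `Z` gives it here.
theorem IsTranslative.sub_risk_mem (hR : IsTranslative M R) (hRM : ∀ X, R X ⊆ M) {X Y Z : G}
    (hZ : Z ∈ R X) (hY : Y ∈ M) : Y - Z ∈ M := by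
  have hZY : Z - Y ∈ M := hR.risk_sub_mem hRM hZ hY
  have hYmem : Y ∈ R (X + (Z - Y)) := (hR.mem_add_iff hZY).2 (by simpa using hZ)
  exact hR.risk_sub_mem hRM hYmem (hRM X hZ)

variable {M' : Set G} {R' : G → Set G}

theorem risk_supset_iUnion_of_acceptance_supset (hR : IsTranslative M R) (hRM : ∀ X, R X ⊆ M)
    (hR' : IsTranslative M' R') (hRM' : ∀ X, R' X ⊆ M') (hMM' : M ⊆ M')
    (hA : {Z | 0 ∈ R' Z} + ({Z | 0 ∈ R Z} ∩ M') ⊆ {Z | 0 ∈ R Z}) (X : G) :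
    (⋃ Z ∈ R' X, R (-Z)) ⊆ R X := by
  simp only [iUnion_subset_iff]
  intro Z hZ Y hY
  have hYM : Y ∈ M := hRM (-Z) hY
  have hXZ : 0 ∈ R' (X + Z) := (hR'.zero_mem_add_iff (hRM' X hZ)).2 hZ
  have hYZ : 0 ∈ R (Y - Z) := by
    rw [sub_eq_neg_add]
    exact (hR.zero_mem_add_iff hYM).2 hY
  have hYZM' : Y - Z ∈ M' := hR'.sub_risk_mem hRM' hZ (hMM' hYM)
  have hXY : 0 ∈ R (X + Y) := by
    have := hA (Set.add_mem_add hXZ ⟨hYZ, hYZM'⟩)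
    rwa [add_add_sub_cancel] at this
  exact (hR.zero_mem_add_iff hYM).1 hXY

theorem acceptance_supset_of_risk_supset_iUnion (hR' : IsTranslative M' R')
    (h : ∀ X, (⋃ Z ∈ R' X, R (-Z)) ⊆ R X) :
    {Z | 0 ∈ R' Z} + ({Z | 0 ∈ R Z} ∩ M') ⊆ {Z | 0 ∈ R Z} := by
  rintro _ ⟨a, ha, m, ⟨hm, hmM'⟩, rfl⟩
  have hneg : -m ∈ R' (a + m) := (hR'.mem_add_iff hmM').2 (by simpa using ha)
  exact h (a + m) (mem_biUnion hneg (by simpa using hm))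

end Translative

theorem acceptance_supset_iff_risk_supset_union_general
    (μ : Measure Ω) (p : ℝ≥0∞) (d : ℕ)
    (T : ℕ)
    (M : ℕ → Set (Lp (Ed d) p μ))
    (R : ℕ → Lp (Ed d) p μ → Set (Lp (Ed d) p μ))
    (hR : ∀ t ≤ T, IsCondRM μ p d (M t) (R t))
    (t s : ℕ) (hts : t + s ≤ T) :
    ((M t ⊆ M (t + s)) →
      {Z | 0 ∈ R (t + s) Z} + ({Z | 0 ∈ R t Z} ∩ M (t + s)) ⊆ {Z | 0 ∈ R t Z} →
      ∀ X : Lp (Ed d) p μ, (⋃ Z ∈ R (t + s) X, R t (-Z)) ⊆ R t X) ∧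
    ((∀ X : Lp (Ed d) p μ, (⋃ Z ∈ R (t + s) X, R t (-Z)) ⊆ R t X) →
      {Z | 0 ∈ R (t + s) Z} + ({Z | 0 ∈ R t Z} ∩ M (t + s)) ⊆ {Z | 0 ∈ R t Z}) := by
  obtain ⟨hRM, -, hRtrans, -⟩ := hR t (by omega)
  obtain ⟨hRM', -, hRtrans', -⟩ := hR (t + s) hts
  exact ⟨risk_supset_iUnion_of_acceptance_supset hRtrans hRM hRtrans' hRM',
    acceptance_supset_of_risk_supset_iUnion hRtrans'⟩

/-- with `M_t ⊆ M_{t+s}`, `A_t ⊇ A_{t+s} + A_{t,t+s}^{M_{t+s}}` implies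
`R_t(X) ⊇ ⋃_{Z ∈ R_{t+s}(X)} R_t(−Z)`; conversely (without any inclusion of eligible
sets), the latter implies the former. -/
theorem acceptance_supset_iff_risk_supset_union
    (μ : Measure Ω) [IsProbabilityMeasure μ] (p : ℝ≥0∞) [Fact (1 ≤ p)] (d : ℕ)
    (T : ℕ) (F : ℕ → MeasurableSpace Ω) (hFle : ∀ t, F t ≤ m0) (hFmono : Monotone F)
    (M : ℕ → Set (Lp (Ed d) p μ))
    (hMF : ∀ t ≤ T, M t ⊆ {X | AEStronglyMeasurable[F t] X μ})
    (R : ℕ → Lp (Ed d) p μ → Set (Lp (Ed d) p μ))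
    (hR : ∀ t ≤ T, IsCondRM μ p d (M t) (R t))
    (t s : ℕ) (hts : t + s ≤ T) :
    ((M t ⊆ M (t + s)) →
      {Z | 0 ∈ R (t + s) Z} + ({Z | 0 ∈ R t Z} ∩ M (t + s)) ⊆ {Z | 0 ∈ R t Z} →
      ∀ X : Lp (Ed d) p μ, (⋃ Z ∈ R (t + s) X, R t (-Z)) ⊆ R t X) ∧
    ((∀ X : Lp (Ed d) p μ, (⋃ Z ∈ R (t + s) X, R t (-Z)) ⊆ R t X) →
      {Z | 0 ∈ R (t + s) Z} + ({Z | 0 ∈ R t Z} ∩ M (t + s)) ⊆ {Z | 0 ∈ R t Z}) :=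
  acceptance_supset_iff_risk_supset_union_general μ p d T M R hR t s hts
end
end

section
/- For a normalized dynamic risk measure (R_t), the following are equivalent: (i) multi-portfolio time consistency; (ii) for all t and A,B ⊆ L^p_d(F_T), ∪_{X∈A} R_{t+1}(X) = ∪_{Y∈B} R_{t+1}(Y) implies ∪_{X∈A} R_t(X) = ∪_{Y∈B} R_t(Y); (iii) recursiveness: R_t(X) = ∪_{Z ∈ R_{t+1}(X)} R_t(−Z) for all t < T and all X. If additionally M_t ⊆ M_{t+1} for all t, these are also equivalent to (iv) A_t = A_{t+1} + A_{t,t+1}^{M_{t+1}} for all t < T. -/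
open MeasureTheory Set Pointwise ENNReal
noncomputable section

variable {Ω : Type*} {m0 : MeasurableSpace Ω}

/-- Multi-portfolio time consistency of a dynamic risk measure `(R_t)_{t=0}^T`. -/
def MPTC (μ : Measure Ω) (p : ℝ≥0∞) (d : ℕ) (T : ℕ)
    (R : ℕ → Lp (Ed d) p μ → Set (Lp (Ed d) p μ)) : Prop :=
  ∀ t, t + 1 ≤ T → ∀ A B : Set (Lp (Ed d) p μ),
    (⋃ X ∈ A, R (t + 1) X) ⊆ (⋃ Y ∈ B, R (t + 1) Y) →
    (⋃ X ∈ A, R t X) ⊆ (⋃ Y ∈ B, R t Y)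

/-!
Translativity makes every `R_t X` a translate of `R_t 0`, so `u ∈ R_t X ↔ 0 ∈ R_t (X + u)` for
eligible `u`, and the eligible set `M_t` is an additive subgroup. Under normalization this gives
`R_{t+1} X = ⋃_{Z ∈ R_{t+1} X} R_{t+1} (-Z)`; applying multi-portfolio time consistency to
`A = {X}` and `B = -R_{t+1} X` (in both directions) yields recursiveness, and recursiveness
expresses `⋃_{X ∈ A} R_t X` through `⋃_{X ∈ A} R_{t+1} X`, which gives time consistency back.
For the acceptance sets, writing `X + u = (X + Z) + (u - Z)` shows that
`u ∈ ⋃_{Z ∈ R_{t+1} X} R_t (-Z)` iff `X + u ∈ A_{t+1} + (A_t ∩ M_{t+1})`, while `u ∈ R_t X` iff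
`X + u ∈ A_t`.
-/

section BiUnion

variable {α β : Type*}

def PreservesBiUnionSubset (S S' : α → Set β) : Prop :=
  ∀ A B : Set α, (⋃ X ∈ A, S X) ⊆ (⋃ Y ∈ B, S Y) → (⋃ X ∈ A, S' X) ⊆ (⋃ Y ∈ B, S' Y)

def PreservesBiUnionEq (S S' : α → Set β) : Prop :=
  ∀ A B : Set α, (⋃ X ∈ A, S X) = (⋃ Y ∈ B, S Y) → (⋃ X ∈ A, S' X) = (⋃ Y ∈ B, S' Y)

theorem preservesBiUnionSubset_iff_preservesBiUnionEq {S S' : α → Set β} :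
    PreservesBiUnionSubset S S' ↔ PreservesBiUnionEq S S' := by
  constructor
  · intro h A B hAB
    exact (h A B hAB.subset).antisymm (h B A hAB.symm.subset)
  · intro h A B hAB
    -- an inclusion of unions is an equality after adjoining `A` to `B`
    have hunion : (⋃ X ∈ A ∪ B, S X) = ⋃ Y ∈ B, S Y := by
      rw [biUnion_union, union_eq_right.mpr hAB]
    have h' := h (A ∪ B) B hunion
    rw [biUnion_union] at h'
    exact subset_union_left.trans h'.subset

theorem preservesBiUnionSubset_iff_eq_biUnion [Neg α] {S S' : α → Set α}
    (hS : ∀ X, (⋃ Z ∈ S X, S (-Z)) = S X) :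
    PreservesBiUnionSubset S S' ↔ ∀ X, S' X = ⋃ Z ∈ S X, S' (-Z) := by
  constructor
  · intro h X
    have hS' : (⋃ X' ∈ ({X} : Set α), S X') = ⋃ Y ∈ Neg.neg '' S X, S Y := by
      rw [biUnion_singleton, biUnion_image, hS]
    have hle := h _ _ hS'.le
    have hge := h _ _ hS'.ge
    rw [biUnion_singleton, biUnion_image] at hle hge
    exact hle.antisymm hge
  · intro hrec A B hAB
    refine iUnion₂_subset fun X hX => ?_
    rw [hrec X]
    refine iUnion₂_subset fun Z hZ => ?_
    obtain ⟨Y, hY, hZY⟩ := mem_iUnion₂.mp (hAB (mem_biUnion hX hZ))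
    calc S' (-Z) ⊆ S' Y := by
          rw [hrec Y]
          exact subset_biUnion_of_mem (u := fun Z => S' (-Z)) hZY
      _ ⊆ ⋃ Y ∈ B, S' Y := subset_biUnion_of_mem hY

end BiUnion

structure IsTranslativeIn {G : Type*} [AddCommGroup G] (M : Set G) (R : G → Set G) : Prop where
  subset : ∀ X, R X ⊆ M
  translate : ∀ X, ∀ m ∈ M, R (X + m) = (fun u => u - m) '' R X
  nonempty_zero : (R 0).Nonempty

def acceptanceSet {G : Type*} [Zero G] (R : G → Set G) : Set G := {Z | 0 ∈ R Z}

namespace IsTranslativeIn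

variable {G : Type*} [AddCommGroup G] {M : Set G} {R : G → Set G}

theorem mem_iff_add_mem_acceptanceSet (h : IsTranslativeIn M R) {X m : G} (hm : m ∈ M) :
    m ∈ R X ↔ X + m ∈ acceptanceSet R := by
  simp [acceptanceSet, h.translate X m hm, sub_eq_zero]

theorem add_mem_acceptanceSet (h : IsTranslativeIn M R) {X m : G} (hm : m ∈ R X) :
    X + m ∈ acceptanceSet R :=
  (h.mem_iff_add_mem_acceptanceSet (h.subset X hm)).mp hm

theorem sub_mem_of_mem (h : IsTranslativeIn M R) {W x m : G} (hx : x ∈ R W) (hm : m ∈ M) :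
    x - m ∈ M :=
  h.subset (W + m) (by rw [h.translate W m hm]; exact mem_image_of_mem _ hx)

theorem exists_mem_acceptanceSet (h : IsTranslativeIn M R) : ∃ Y, Y ∈ acceptanceSet R :=
  let ⟨_, hw⟩ := h.nonempty_zero
  ⟨_, h.add_mem_acceptanceSet hw⟩

theorem zero_mem (h : IsTranslativeIn M R) : (0 : G) ∈ M :=
  let ⟨Y, hY⟩ := h.exists_mem_acceptanceSet
  h.subset Y hY

theorem neg_mem (h : IsTranslativeIn M R) {m : G} (hm : m ∈ M) : -m ∈ M := by
  obtain ⟨Y, hY⟩ := h.exists_mem_acceptanceSet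
  simpa using h.sub_mem_of_mem hY hm

theorem sub_mem (h : IsTranslativeIn M R) {m m' : G} (hm : m ∈ M) (hm' : m' ∈ M) :
    m - m' ∈ M := by
  obtain ⟨Y, hY⟩ := h.exists_mem_acceptanceSet
  have hm_mem : m ∈ R (Y + -m) := by
    rw [h.translate Y (-m) (h.neg_mem hm)]
    exact ⟨0, hY, by simp⟩
  exact h.sub_mem_of_mem hm_mem hm'

theorem biUnion_neg_eq_of_eq_add_zero (h : IsTranslativeIn M R) {X : G}
    (hnorm : R X = R X + R 0) : (⋃ Z ∈ R X, R (-Z)) = R X := by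
  have hneg : ∀ Z ∈ R X, R (-Z) = (Z + ·) '' R 0 := fun Z hZ => by
    rw [← zero_add (-Z), h.translate 0 (-Z) (h.neg_mem (h.subset X hZ))]
    simp only [sub_neg_eq_add, add_comm]
  rw [iUnion₂_congr hneg, iUnion_add_left_image, ← hnorm]

end IsTranslativeIn

section Recursion

variable {G : Type*} [AddCommGroup G] {M₀ M₁ : Set G} {R₀ R₁ : G → Set G}

theorem mem_biUnion_neg_iff (hM : M₀ ⊆ M₁) (h₀ : IsTranslativeIn M₀ R₀)
    (h₁ : IsTranslativeIn M₁ R₁) {X u : G} (hu : u ∈ M₀) :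
    u ∈ ⋃ Z ∈ R₁ X, R₀ (-Z) ↔
      X + u ∈ acceptanceSet R₁ + (acceptanceSet R₀ ∩ M₁) := by
  simp only [mem_iUnion₂, mem_add, mem_inter_iff]
  constructor
  · rintro ⟨Z, hZ, huZ⟩
    have hZM := h₁.subset X hZ
    refine ⟨X + Z, h₁.add_mem_acceptanceSet hZ, u - Z, ⟨?_, h₁.sub_mem (hM hu) hZM⟩, by abel⟩
    simpa [neg_add_eq_sub] using h₀.add_mem_acceptanceSet huZ
  · rintro ⟨Y₁, hY₁, Y₂, ⟨hY₂, hY₂M⟩, hsum⟩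
    refine ⟨u - Y₂, ?_, ?_⟩
    · rw [h₁.mem_iff_add_mem_acceptanceSet (h₁.sub_mem (hM hu) hY₂M)]
      convert hY₁ using 1
      rw [← add_sub_assoc, ← hsum, add_sub_cancel_right]
    · rw [h₀.mem_iff_add_mem_acceptanceSet hu]
      convert hY₂ using 1
      abel

theorem eq_biUnion_neg_iff_acceptanceSet_eq (hM : M₀ ⊆ M₁) (h₀ : IsTranslativeIn M₀ R₀)
    (h₁ : IsTranslativeIn M₁ R₁) :
    (∀ X, R₀ X = ⋃ Z ∈ R₁ X, R₀ (-Z)) ↔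
      acceptanceSet R₀ = acceptanceSet R₁ + (acceptanceSet R₀ ∩ M₁) := by
  constructor
  · intro hrec
    ext X
    have h0 := mem_biUnion_neg_iff hM h₀ h₁ (X := X) h₀.zero_mem
    rwa [add_zero, ← hrec] at h0
  · intro hacc X
    ext u
    by_cases hu : u ∈ M₀
    · rw [mem_biUnion_neg_iff hM h₀ h₁ hu, h₀.mem_iff_add_mem_acceptanceSet hu, ← hacc]
    · have hR₀ : ∀ Y, u ∉ R₀ Y := fun Y huY => hu (h₀.subset Y huY)
      simp [hR₀]

end Recursion

theorem IsCondRM.isTranslativeIn {μ : Measure Ω} {p : ℝ≥0∞} {d : ℕ} {M : Set (Lp (Ed d) p μ)}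
    {R : Lp (Ed d) p μ → Set (Lp (Ed d) p μ)} (h : IsCondRM μ p d M R) :
    IsTranslativeIn M R :=
  ⟨h.1, h.2.2.1, h.2.2.2.2.1⟩

theorem mptc_equivalences_general
    (μ : Measure Ω) (p : ℝ≥0∞) (d : ℕ)
    (T : ℕ) (M : ℕ → Set (Lp (Ed d) p μ))
    (R : ℕ → Lp (Ed d) p μ → Set (Lp (Ed d) p μ))
    (hR : ∀ t ≤ T, IsCondRM μ p d (M t) (R t))
    (hnorm : ∀ t ≤ T, ∀ X, R t X = R t X + R t 0) :
    (MPTC μ p d T R ↔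
      (∀ t, t + 1 ≤ T → ∀ A B : Set (Lp (Ed d) p μ),
        (⋃ X ∈ A, R (t + 1) X) = (⋃ Y ∈ B, R (t + 1) Y) →
        (⋃ X ∈ A, R t X) = (⋃ Y ∈ B, R t Y))) ∧
    (MPTC μ p d T R ↔
      (∀ t, t + 1 ≤ T → ∀ X : Lp (Ed d) p μ, R t X = ⋃ Z ∈ R (t + 1) X, R t (-Z))) ∧
    ((∀ t, t + 1 ≤ T → M t ⊆ M (t + 1)) →
      (MPTC μ p d T R ↔
        (∀ t, t + 1 ≤ T →
          {Z | 0 ∈ R t Z} =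
            {Z | 0 ∈ R (t + 1) Z} + ({Z | 0 ∈ R t Z} ∩ M (t + 1))))) := by
  have htr : ∀ t ≤ T, IsTranslativeIn (M t) (R t) := fun t ht => (hR t ht).isTranslativeIn
  have hrec : MPTC μ p d T R ↔
      ∀ t, t + 1 ≤ T → ∀ X, R t X = ⋃ Z ∈ R (t + 1) X, R t (-Z) :=
    forall₂_congr fun t ht => preservesBiUnionSubset_iff_eq_biUnion fun X =>
      (htr (t + 1) ht).biUnion_neg_eq_of_eq_add_zero (hnorm (t + 1) ht X)
  refine ⟨forall₂_congr fun t _ => preservesBiUnionSubset_iff_preservesBiUnionEq, hrec,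
    fun hM => hrec.trans (forall₂_congr fun t ht => ?_)⟩
  exact eq_biUnion_neg_iff_acceptanceSet_eq (hM t ht) (htr t (by omega)) (htr (t + 1) ht)

/-- for a normalized dynamic risk measure, multi-portfolio time consistency
is equivalent to the union-equality version and to recursiveness; if moreover
`M_t ⊆ M_{t+1}` for all `t`, these are equivalent to `A_t = A_{t+1} + A_{t,t+1}^{M_{t+1}}`. -/
theorem mptc_equivalences
    (μ : Measure Ω) [IsProbabilityMeasure μ] (p : ℝ≥0∞) [Fact (1 ≤ p)] (d : ℕ)
    (T : ℕ) (F : ℕ → MeasurableSpace Ω) (hFle : ∀ t, F t ≤ m0) (hFmono : Monotone F)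
    (M : ℕ → Set (Lp (Ed d) p μ))
    (hMF : ∀ t ≤ T, M t ⊆ {X | AEStronglyMeasurable[F t] X μ})
    (R : ℕ → Lp (Ed d) p μ → Set (Lp (Ed d) p μ))
    (hR : ∀ t ≤ T, IsCondRM μ p d (M t) (R t))
    (hnorm : ∀ t ≤ T, ∀ X, R t X = R t X + R t 0) :
    (MPTC μ p d T R ↔
      (∀ t, t + 1 ≤ T → ∀ A B : Set (Lp (Ed d) p μ),
        (⋃ X ∈ A, R (t + 1) X) = (⋃ Y ∈ B, R (t + 1) Y) →
        (⋃ X ∈ A, R t X) = (⋃ Y ∈ B, R t Y))) ∧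
    (MPTC μ p d T R ↔
      (∀ t, t + 1 ≤ T → ∀ X : Lp (Ed d) p μ, R t X = ⋃ Z ∈ R (t + 1) X, R t (-Z))) ∧
    ((∀ t, t + 1 ≤ T → M t ⊆ M (t + 1)) →
      (MPTC μ p d T R ↔
        (∀ t, t + 1 ≤ T →
          {Z | 0 ∈ R t Z} =
            {Z | 0 ∈ R (t + 1) Z} + ({Z | 0 ∈ R t Z} ∩ M (t + 1))))) :=
  mptc_equivalences_general μ p d T M R hR hnorm
end
end

section
/- Let (R_t) be a normalized time consistent dynamic risk measure such that for every t < T and every X ∈ L^p_d(F_T) there exists Ẑ ∈ R_{t+1}(X) with R_{t+1}(−Ẑ) ⊇ R_{t+1}(X). Then (R_t) is multi-portfolio time consistent; in fact it is recursive: R_t(X) = ∪_{Z ∈ R_{t+1}(X)} R_t(−Z). -/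
/-!
If `Z ∈ R_{t+1}(X)`, translativity gives `R_{t+1}(0) = R_{t+1}(-Z) - Z`, so every `u ∈ R_{t+1}(-Z)`
splits as `Z + (u - Z) ∈ R_{t+1}(X) + R_{t+1}(0) = R_{t+1}(X)` by normalization. Hence
`R_{t+1}(-Z) ⊆ R_{t+1}(X)` and time consistency gives `R_t(-Z) ⊆ R_t(X)`. Conversely the assumed
`Ẑ` with `R_{t+1}(X) ⊆ R_{t+1}(-Ẑ)` gives `R_t(X) ⊆ R_t(-Ẑ)`, which proves recursiveness.
Recursiveness rewrites `⋃_{X ∈ A} R_t(X)` as a union of `R_t(-Z)` over `Z ∈ ⋃_{X ∈ A} R_{t+1}(X)`,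
which is monotone in that set: this is multi-portfolio time consistency.
-/

open MeasureTheory Set Pointwise ENNReal
noncomputable section

variable {Ω : Type*} {m0 : MeasurableSpace Ω}

section SetValued

variable {G : Type*} [AddCommGroup G] {M : Set G} {R : G → Set G}

theorem sub_mem_apply_zero_of_mem_apply_neg
    (htr : ∀ X, ∀ m ∈ M, R (X + m) = (fun u => u - m) '' R X)
    {Z u : G} (hZ : Z ∈ M) (hu : u ∈ R (-Z)) : u - Z ∈ R 0 := by
  rw [← neg_add_cancel Z, htr (-Z) Z hZ]
  exact mem_image_of_mem _ hu

theorem apply_neg_subset_of_mem (hsub : ∀ X, R X ⊆ M)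
    (htr : ∀ X, ∀ m ∈ M, R (X + m) = (fun u => u - m) '' R X)
    {X Z : G} (hnorm : R X = R X + R 0) (hZX : Z ∈ R X) : R (-Z) ⊆ R X := by
  intro u hu
  have hsplit : Z + (u - Z) ∈ R X + R 0 :=
    add_mem_add hZX (sub_mem_apply_zero_of_mem_apply_neg htr (hsub X hZX) hu)
  rwa [add_sub_cancel, ← hnorm] at hsplit

end SetValued

theorem eq_biUnion_of_subset_of_exists {α β γ : Type*} {R : α → Set γ} {R' : α → Set β}
    {f : γ → α}
    (hmono : ∀ X Y, R X ⊆ R Y → R' X ⊆ R' Y)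
    (hle : ∀ X, ∀ Z ∈ R X, R (f Z) ⊆ R X) (hge : ∀ X, ∃ Z ∈ R X, R X ⊆ R (f Z)) (X : α) :
    R' X = ⋃ Z ∈ R X, R' (f Z) := by
  refine Subset.antisymm ?_ (iUnion₂_subset fun Z hZ => hmono _ _ (hle X Z hZ))
  obtain ⟨Z, hZ, hsup⟩ := hge X
  exact (hmono _ _ hsup).trans (subset_biUnion_of_mem (u := fun Z => R' (f Z)) hZ)

theorem biUnion_subset_biUnion_of_eq_biUnion {α β : Type*} {R R' : α → Set β}
    {g : β → Set β} (hrec : ∀ X, R' X = ⋃ Z ∈ R X, g Z) {A B : Set α}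
    (h : ⋃ X ∈ A, R X ⊆ ⋃ Y ∈ B, R Y) : ⋃ X ∈ A, R' X ⊆ ⋃ Y ∈ B, R' Y := by
  simp only [hrec, ← biUnion_iUnion]
  exact biUnion_subset_biUnion_left h

theorem time_consistent_implies_mptc_general
    (μ : Measure Ω) (p : ℝ≥0∞) (d : ℕ)
    (T : ℕ)
    (M : ℕ → Set (Lp (Ed d) p μ))
    (R : ℕ → Lp (Ed d) p μ → Set (Lp (Ed d) p μ))
    (hR : ∀ t ≤ T, IsCondRM μ p d (M t) (R t))
    (hnorm : ∀ t ≤ T, ∀ X, R t X = R t X + R t 0)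
    (htc : ∀ t, t + 1 ≤ T → ∀ X Y : Lp (Ed d) p μ,
      R (t + 1) X ⊆ R (t + 1) Y → R t X ⊆ R t Y)
    (hZ : ∀ t, t + 1 ≤ T → ∀ X : Lp (Ed d) p μ,
      ∃ Z ∈ R (t + 1) X, R (t + 1) X ⊆ R (t + 1) (-Z)) :
    (∀ t, t + 1 ≤ T → ∀ X : Lp (Ed d) p μ, R t X = ⋃ Z ∈ R (t + 1) X, R t (-Z)) ∧
      MPTC μ p d T R := by
  have hrec : ∀ t, t + 1 ≤ T → ∀ X : Lp (Ed d) p μ, R t X = ⋃ Z ∈ R (t + 1) X, R t (-Z) := by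
    intro t ht
    obtain ⟨hsub, -, htr, -⟩ := hR (t + 1) ht
    exact eq_biUnion_of_subset_of_exists (htc t ht)
      (fun X _ hZX => apply_neg_subset_of_mem hsub htr (hnorm (t + 1) ht X) hZX) (hZ t ht)
  exact ⟨hrec, fun t ht _ _ => biUnion_subset_biUnion_of_eq_biUnion (hrec t ht)⟩

/-- a normalized time consistent dynamic risk measure such that for every
`t < T` and `X` there is `Ẑ ∈ R_{t+1}(X)` with `R_{t+1}(−Ẑ) ⊇ R_{t+1}(X)` is recursive,
and hence multi-portfolio time consistent. -/
theorem time_consistent_implies_mptc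
    (μ : Measure Ω) [IsProbabilityMeasure μ] (p : ℝ≥0∞) [Fact (1 ≤ p)] (d : ℕ)
    (T : ℕ) (F : ℕ → MeasurableSpace Ω) (hFle : ∀ t, F t ≤ m0) (hFmono : Monotone F)
    (M : ℕ → Set (Lp (Ed d) p μ))
    (hMF : ∀ t ≤ T, M t ⊆ {X | AEStronglyMeasurable[F t] X μ})
    (R : ℕ → Lp (Ed d) p μ → Set (Lp (Ed d) p μ))
    (hR : ∀ t ≤ T, IsCondRM μ p d (M t) (R t))
    (hnorm : ∀ t ≤ T, ∀ X, R t X = R t X + R t 0)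
    (htc : ∀ t, t + 1 ≤ T → ∀ X Y : Lp (Ed d) p μ,
      R (t + 1) X ⊆ R (t + 1) Y → R t X ⊆ R t Y)
    (hZ : ∀ t, t + 1 ≤ T → ∀ X : Lp (Ed d) p μ,
      ∃ Z ∈ R (t + 1) X, R (t + 1) X ⊆ R (t + 1) (-Z)) :
    (∀ t, t + 1 ≤ T → ∀ X : Lp (Ed d) p μ, R t X = ⋃ Z ∈ R (t + 1) X, R t (-Z)) ∧
      MPTC μ p d T R :=
  time_consistent_implies_mptc_general μ p d T M R hR hnorm htc hZ
end
end

section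
/- If (R_t) is a time consistent dynamic risk measure and R_τ is normalized for some time τ, then for every t ≤ τ, R_t is R_τ(0)-monotone: Y − X ∈ R_τ(0) implies R_t(Y) ⊇ R_t(X). -/
open MeasureTheory Set Pointwise ENNReal
noncomputable section

variable {Ω : Type*} {m0 : MeasurableSpace Ω}

/-! Normalization and translativity of `R_τ` already give `R_τ(X) ⊆ R_τ(Y)`: for `u ∈ R_τ(X)`,
`u + (Y - X) ∈ R_τ(X) + R_τ(0) = R_τ(X)`, and translating by `Y - X ∈ M_τ` turns it into
`u ∈ R_τ(Y)`. Time consistency then carries the inclusion back to every `t ≤ τ`. -/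

theorem subset_of_sub_mem_apply_zero {G : Type*} [AddCommGroup G] {M : Set G}
    {R : G → Set G} (htrans : ∀ X, ∀ m ∈ M, R (X + m) = (fun u => u - m) '' R X)
    (hnorm : ∀ X, R X = R X + R 0) {X Y : G} (hM : Y - X ∈ M) (hR : Y - X ∈ R 0) :
    R X ⊆ R Y := by
  intro u hu
  have hshift : u + (Y - X) ∈ R X := hnorm X ▸ add_mem_add hu hR
  rw [← add_sub_cancel X Y, htrans X _ hM]
  exact ⟨u + (Y - X), hshift, add_sub_cancel_right u (Y - X)⟩

theorem subset_of_time_consistent_of_le {α β : Type*} (R : ℕ → α → Set β) {T τ : ℕ}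
    (htc : ∀ t, t + 1 ≤ T → ∀ X Y : α, R (t + 1) X ⊆ R (t + 1) Y → R t X ⊆ R t Y)
    (hτ : τ ≤ T) {X Y : α} (h : R τ X ⊆ R τ Y) {t : ℕ} (ht : t ≤ τ) : R t X ⊆ R t Y :=
  Nat.decreasingInduction (fun k hk ih => htc k (by omega) X Y ih) h ht

theorem time_consistent_normalized_monotone_general
    (μ : Measure Ω) (p : ℝ≥0∞) (d : ℕ)
    (T : ℕ)
    (M : ℕ → Set (Lp (Ed d) p μ))
    (R : ℕ → Lp (Ed d) p μ → Set (Lp (Ed d) p μ))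
    (hR : ∀ t ≤ T, IsCondRM μ p d (M t) (R t))
    (htc : ∀ t, t + 1 ≤ T → ∀ X Y : Lp (Ed d) p μ,
      R (t + 1) X ⊆ R (t + 1) Y → R t X ⊆ R t Y)
    (τ : ℕ) (hτ : τ ≤ T)
    (hnormτ : ∀ X, R τ X = R τ X + R τ 0) :
    ∀ t ≤ τ, ∀ X Y : Lp (Ed d) p μ, Y - X ∈ R τ 0 → R t X ⊆ R t Y := by
  intro t ht X Y hXY
  obtain ⟨hRM, -, htrans, -⟩ := hR τ hτ
  exact subset_of_time_consistent_of_le R htc hτ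
    (subset_of_sub_mem_apply_zero htrans hnormτ (hRM 0 hXY) hXY) ht

/-- if `(R_t)` is time consistent and `R_τ` is normalized, then for every
`t ≤ τ`, `R_t` is `R_τ(0)`-monotone. -/
theorem time_consistent_normalized_monotone
    (μ : Measure Ω) [IsProbabilityMeasure μ] (p : ℝ≥0∞) [Fact (1 ≤ p)] (d : ℕ)
    (T : ℕ) (F : ℕ → MeasurableSpace Ω) (hFle : ∀ t, F t ≤ m0) (hFmono : Monotone F)
    (M : ℕ → Set (Lp (Ed d) p μ))
    (hMF : ∀ t ≤ T, M t ⊆ {X | AEStronglyMeasurable[F t] X μ})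
    (R : ℕ → Lp (Ed d) p μ → Set (Lp (Ed d) p μ))
    (hR : ∀ t ≤ T, IsCondRM μ p d (M t) (R t))
    (htc : ∀ t, t + 1 ≤ T → ∀ X Y : Lp (Ed d) p μ,
      R (t + 1) X ⊆ R (t + 1) Y → R t X ⊆ R t Y)
    (τ : ℕ) (hτ : τ ≤ T)
    (hnormτ : ∀ X, R τ X = R τ X + R τ 0) :
    ∀ t ≤ τ, ∀ X Y : Lp (Ed d) p μ, Y - X ∈ R τ 0 → R t X ⊆ R t Y :=
  time_consistent_normalized_monotone_general μ p d T M R hR htc τ hτ hnormτ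
end
end

section
/- Let (R_t) be a dynamic risk measure with M_t ⊆ M_{t+1} for all t < T. Define the backward composition (R̃_t) by R̃_T(X) = R_T(X) and R̃_t(X) = ∪_{Z ∈ R̃_{t+1}(X)} R_t(−Z) for t < T. Then (R̃_t) is multi-portfolio time consistent, each R̃_t is M_t-translative and L^p_d(F_T)_+-monotone, and if (R_t) is (conditionally) convex then so is (R̃_t). -/
/-!
`R̃_t(X)` depends on `X` only through the set `R̃_{t+1}(X)`, which gives multi-portfolio time
consistency at once. Every other property is pushed down from `R̃_T = R_T` one step at a time:
the step `S ↦ (X ↦ ⋃_{Z ∈ S X} R_t(-Z))` preserves translativity (because `M_t ⊆ M_{t+1}`),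
monotonicity, and closedness under any combination `f '' S X + g '' S Y ⊆ S (f X + g Y)` with
`f`, `g` commuting with negation, which covers both convexity and conditional convexity.
-/

open MeasureTheory Set Pointwise ENNReal
noncomputable section

variable {Ω : Type*} {m0 : MeasurableSpace Ω}

/-- Multiplication of an `L^p` random vector by an essentially bounded scalar field. -/
def bsmul (μ : Measure Ω) (p : ℝ≥0∞) (d : ℕ) (l : Lp ℝ ⊤ μ) (X : Lp (Ed d) p μ) :
    Lp (Ed d) p μ :=
  (MemLp.smul (r := p) (Lp.memLp X) (Lp.memLp l)).toLp (fun ω => l ω • X ω)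

/-- The constant function `1` as an element of `L^∞`. -/
def oneL (μ : Measure Ω) : Lp ℝ ⊤ μ := (memLp_top_const (1:ℝ)).toLp _

section BackwardComposition

variable {E : Type*}

def backwardStep [Neg E] (S G : E → Set E) (X : E) : Set E :=
  ⋃ Z ∈ S X, G (-Z)

def IsBackwardComposition [Neg E] (T : ℕ) (R Rtil : ℕ → E → Set E) : Prop :=
  Rtil T = R T ∧ ∀ t, t + 1 ≤ T → Rtil t = backwardStep (Rtil (t + 1)) (R t)

theorem IsBackwardComposition.induction [Neg E] {T : ℕ} {R Rtil : ℕ → E → Set E}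
    (hRtil : IsBackwardComposition T R Rtil) {P : ℕ → (E → Set E) → Prop}
    (base : P T (R T))
    (step : ∀ t, t + 1 ≤ T → P (t + 1) (Rtil (t + 1)) →
      P t (backwardStep (Rtil (t + 1)) (R t))) :
    ∀ t ≤ T, P t (Rtil t) := by
  intro t ht
  induction ht using Nat.decreasingInduction with
  | self => rwa [hRtil.1]
  | of_succ t ht ih => rw [hRtil.2 t ht]; exact step t ht ih

theorem backwardStep_biUnion_subset [Neg E] {S G : E → Set E} {A B : Set E}
    (h : ⋃ X ∈ A, S X ⊆ ⋃ Y ∈ B, S Y) :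
    ⋃ X ∈ A, backwardStep S G X ⊆ ⋃ Y ∈ B, backwardStep S G Y := by
  simp only [backwardStep, ← biUnion_iUnion]
  exact biUnion_subset_biUnion_left h

theorem backwardStep_mono [Neg E] {S G : E → Set E} {X Y : E} (h : S X ⊆ S Y) :
    backwardStep S G X ⊆ backwardStep S G Y :=
  biUnion_subset_biUnion_left h

theorem backwardStep_add [AddCommGroup E] {S G : E → Set E} {X m : E}
    (hS : S (X + m) = (· - m) '' S X) (hG : ∀ Z, G (Z + m) = (· - m) '' G Z) :
    backwardStep S G (X + m) = (· - m) '' backwardStep S G X := by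
  have neg_sub_eq (Z : E) : -(Z - m) = -Z + m := by abel
  calc backwardStep S G (X + m) = ⋃ Z ∈ S X, G (-Z + m) := by
        simp only [backwardStep, hS, biUnion_image, neg_sub_eq]
    _ = (· - m) '' backwardStep S G X := by
        simp only [backwardStep, hG, image_iUnion₂]

theorem backwardStep_image_add_image_subset [AddCommGroup E] {S G : E → Set E} {X Y : E}
    {f g : E → E} (hf : ∀ Z, f (-Z) = -f Z) (hg : ∀ Z, g (-Z) = -g Z)
    (hS : f '' S X + g '' S Y ⊆ S (f X + g Y))
    (hG : ∀ Z W, f '' G Z + g '' G W ⊆ G (f Z + g W)) :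
    f '' backwardStep S G X + g '' backwardStep S G Y ⊆ backwardStep S G (f X + g Y) := by
  rintro _ ⟨_, ⟨a, ha, rfl⟩, _, ⟨b, hb, rfl⟩, rfl⟩
  obtain ⟨Z, hZ, ha⟩ := mem_iUnion₂.mp ha
  obtain ⟨W, hW, hb⟩ := mem_iUnion₂.mp hb
  refine mem_iUnion₂.mpr ⟨f Z + g W, hS (add_mem_add (mem_image_of_mem f hZ)
    (mem_image_of_mem g hW)), ?_⟩
  rw [neg_add, ← hf, ← hg]
  exact hG _ _ (add_mem_add (mem_image_of_mem f ha) (mem_image_of_mem g hb))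

end BackwardComposition

theorem bsmul_neg (μ : Measure Ω) (p : ℝ≥0∞) (d : ℕ) (l : Lp ℝ ⊤ μ) (X : Lp (Ed d) p μ) :
    bsmul μ p d l (-X) = -bsmul μ p d l X := by
  apply Lp.ext
  filter_upwards [MemLp.coeFn_toLp (μ := μ) (f := fun ω => l ω • (-X) ω) _,
    MemLp.coeFn_toLp (μ := μ) (f := fun ω => l ω • X ω) _, Lp.coeFn_neg X,
    Lp.coeFn_neg (bsmul μ p d l X)] with ω h₁ h₂ h₃ h₄
  rw [bsmul, h₁, h₄, Pi.neg_apply, bsmul, h₂, h₃, Pi.neg_apply, smul_neg]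

theorem backward_composition_mptc_general
    (μ : Measure Ω) (p : ℝ≥0∞) [Fact (1 ≤ p)] (d : ℕ)
    (T : ℕ) (F : ℕ → MeasurableSpace Ω) (hFmono : Monotone F)
    (M : ℕ → Set (Lp (Ed d) p μ))
    (hMmono : ∀ t, t + 1 ≤ T → M t ⊆ M (t + 1))
    (R : ℕ → Lp (Ed d) p μ → Set (Lp (Ed d) p μ))
    (hR : ∀ t ≤ T, IsCondRM μ p d (M t) (R t))
    (Rtil : ℕ → Lp (Ed d) p μ → Set (Lp (Ed d) p μ))
    (hT : ∀ X, Rtil T X = R T X)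
    (hrec : ∀ t, t + 1 ≤ T → ∀ X, Rtil t X = ⋃ Z ∈ Rtil (t + 1) X, R t (-Z)) :
    -- multi-portfolio time consistency
    MPTC μ p d T Rtil ∧
    -- M_t-translativity
    (∀ t ≤ T, ∀ X : Lp (Ed d) p μ, ∀ m ∈ M t,
      Rtil t (X + m) = (fun u => u - m) '' Rtil t X) ∧
    -- monotonicity
    (∀ t ≤ T, ∀ X Y : Lp (Ed d) p μ, Y - X ∈ LposT μ p d → Rtil t X ⊆ Rtil t Y) ∧
    -- convexity is inherited
    ((∀ t ≤ T, ∀ X Y : Lp (Ed d) p μ, ∀ c : ℝ, c ∈ Set.Icc (0:ℝ) 1 →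
        c • R t X + (1 - c) • R t Y ⊆ R t (c • X + (1 - c) • Y)) →
      (∀ t ≤ T, ∀ X Y : Lp (Ed d) p μ, ∀ c : ℝ, c ∈ Set.Icc (0:ℝ) 1 →
        c • Rtil t X + (1 - c) • Rtil t Y ⊆ Rtil t (c • X + (1 - c) • Y))) ∧
    -- conditional convexity is inherited
    ((∀ t ≤ T, ∀ X Y : Lp (Ed d) p μ, ∀ l : Lp ℝ ⊤ μ,
        AEStronglyMeasurable[F t] (⇑l) μ → (∀ᵐ ω ∂μ, l ω ∈ Set.Icc (0:ℝ) 1) →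
        bsmul μ p d l '' R t X + bsmul μ p d (oneL μ - l) '' R t Y ⊆
          R t (bsmul μ p d l X + bsmul μ p d (oneL μ - l) Y)) →
      (∀ t ≤ T, ∀ X Y : Lp (Ed d) p μ, ∀ l : Lp ℝ ⊤ μ,
        AEStronglyMeasurable[F t] (⇑l) μ → (∀ᵐ ω ∂μ, l ω ∈ Set.Icc (0:ℝ) 1) →
        bsmul μ p d l '' Rtil t X + bsmul μ p d (oneL μ - l) '' Rtil t Y ⊆
          Rtil t (bsmul μ p d l X + bsmul μ p d (oneL μ - l) Y))) := by
  have hRtil : IsBackwardComposition T R Rtil := ⟨funext hT, fun t ht => funext (hrec t ht)⟩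
  refine ⟨fun t ht A B h => ?_, ?_, ?_, fun hconv => ?_, fun hcconv => ?_⟩
  · rw [hRtil.2 t ht]
    exact backwardStep_biUnion_subset h
  · exact hRtil.induction (P := fun t S => ∀ X, ∀ m ∈ M t, S (X + m) = (· - m) '' S X)
      (hR T le_rfl).2.2.1 fun t ht ih X m hm =>
        backwardStep_add (ih X m (hMmono t ht hm)) fun Z => (hR t (by omega)).2.2.1 Z m hm
  · exact hRtil.induction (P := fun _ S => ∀ X Y, Y - X ∈ LposT μ p d → S X ⊆ S Y)
      (hR T le_rfl).2.2.2.1 fun _ _ ih X Y h => backwardStep_mono (ih X Y h)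
  · exact hRtil.induction (P := fun _ S => ∀ X Y : Lp (Ed d) p μ, ∀ c : ℝ, c ∈ Icc (0:ℝ) 1 →
        c • S X + (1 - c) • S Y ⊆ S (c • X + (1 - c) • Y))
      (hconv T le_rfl) fun t ht ih X Y c hc =>
        backwardStep_image_add_image_subset (smul_neg c) (smul_neg (1 - c)) (ih X Y c hc)
          fun Z W => hconv t (by omega) Z W c hc
  · exact hRtil.induction (P := fun t S => ∀ X Y : Lp (Ed d) p μ, ∀ l : Lp ℝ ⊤ μ,
        AEStronglyMeasurable[F t] (⇑l) μ → (∀ᵐ ω ∂μ, l ω ∈ Icc (0:ℝ) 1) →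
        bsmul μ p d l '' S X + bsmul μ p d (oneL μ - l) '' S Y ⊆
          S (bsmul μ p d l X + bsmul μ p d (oneL μ - l) Y))
      (hcconv T le_rfl) fun t ht ih X Y l hl hl01 =>
        backwardStep_image_add_image_subset (bsmul_neg μ p d l) (bsmul_neg μ p d _)
          (ih X Y l (hl.mono (hFmono t.le_succ)) hl01)
          fun Z W => hcconv t (by omega) Z W l hl hl01

/-- the backward composition `R̃_T = R_T`,
`R̃_t(X) = ⋃_{Z ∈ R̃_{t+1}(X)} R_t(−Z)` of a dynamic risk measure is multi-portfolio time
consistent, `M_t`-translative and monotone, and inherits (conditional) convexity. -/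
theorem backward_composition_mptc
    (μ : Measure Ω) [IsProbabilityMeasure μ] (p : ℝ≥0∞) [Fact (1 ≤ p)] (d : ℕ)
    (T : ℕ) (F : ℕ → MeasurableSpace Ω) (hFle : ∀ t, F t ≤ m0) (hFmono : Monotone F)
    (M : ℕ → Set (Lp (Ed d) p μ))
    (hMF : ∀ t ≤ T, M t ⊆ {X | AEStronglyMeasurable[F t] X μ})
    (hMmono : ∀ t, t + 1 ≤ T → M t ⊆ M (t + 1))
    (R : ℕ → Lp (Ed d) p μ → Set (Lp (Ed d) p μ))
    (hR : ∀ t ≤ T, IsCondRM μ p d (M t) (R t))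
    (Rtil : ℕ → Lp (Ed d) p μ → Set (Lp (Ed d) p μ))
    (hT : ∀ X, Rtil T X = R T X)
    (hrec : ∀ t, t + 1 ≤ T → ∀ X, Rtil t X = ⋃ Z ∈ Rtil (t + 1) X, R t (-Z)) :
    -- multi-portfolio time consistency
    MPTC μ p d T Rtil ∧
    -- M_t-translativity
    (∀ t ≤ T, ∀ X : Lp (Ed d) p μ, ∀ m ∈ M t,
      Rtil t (X + m) = (fun u => u - m) '' Rtil t X) ∧
    -- monotonicity
    (∀ t ≤ T, ∀ X Y : Lp (Ed d) p μ, Y - X ∈ LposT μ p d → Rtil t X ⊆ Rtil t Y) ∧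
    -- convexity is inherited
    ((∀ t ≤ T, ∀ X Y : Lp (Ed d) p μ, ∀ c : ℝ, c ∈ Set.Icc (0:ℝ) 1 →
        c • R t X + (1 - c) • R t Y ⊆ R t (c • X + (1 - c) • Y)) →
      (∀ t ≤ T, ∀ X Y : Lp (Ed d) p μ, ∀ c : ℝ, c ∈ Set.Icc (0:ℝ) 1 →
        c • Rtil t X + (1 - c) • Rtil t Y ⊆ Rtil t (c • X + (1 - c) • Y))) ∧
    -- conditional convexity is inherited
    ((∀ t ≤ T, ∀ X Y : Lp (Ed d) p μ, ∀ l : Lp ℝ ⊤ μ,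
        AEStronglyMeasurable[F t] (⇑l) μ → (∀ᵐ ω ∂μ, l ω ∈ Set.Icc (0:ℝ) 1) →
        bsmul μ p d l '' R t X + bsmul μ p d (oneL μ - l) '' R t Y ⊆
          R t (bsmul μ p d l X + bsmul μ p d (oneL μ - l) Y)) →
      (∀ t ≤ T, ∀ X Y : Lp (Ed d) p μ, ∀ l : Lp ℝ ⊤ μ,
        AEStronglyMeasurable[F t] (⇑l) μ → (∀ᵐ ω ∂μ, l ω ∈ Set.Icc (0:ℝ) 1) →
        bsmul μ p d l '' Rtil t X + bsmul μ p d (oneL μ - l) '' Rtil t Y ⊆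
          Rtil t (bsmul μ p d l X + bsmul μ p d (oneL μ - l) Y))) :=
  backward_composition_mptc_general μ p d T F hFmono M hMmono R hR Rtil hT hrec
end
end

section
/- For t ∈ {0,…,T} let A_t, C_t, D_t ⊆ L^p_d(F_T) with A_t = A_{t+1} + D_t for all t < T. Then the following are equivalent: (i) A_t = A_t + C_t for all t; (ii) A_t = A_t + C_s for all t ≤ s; (iii) A_t = A_t + Σ_{τ=t}^{T} C_τ for all t. -/
/-!
Iterating `A_t = A_{t+1} + D_t` gives `A_t = A_s + Σ_{τ ∈ [t, s)} D_τ` for `t ≤ s`, so whatever is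
absorbed by `A_s` is absorbed by `A_t`; this gives (i) ⇒ (ii). The sets absorbed by a fixed set form
an additive submonoid, which gives (ii) ⇒ (iii). Since `0 ∈ C_τ`, the sum `Σ_{τ=t}^T C_τ` contains
`C_t`, which gives (iii) ⇒ (i).
-/

open Set Pointwise

section AddCommMonoid

variable {M : Type*} [AddCommMonoid M]

theorem add_finset_sum_eq_self {ι : Type*} {x : M} {c : ι → M} {s : Finset ι}
    (h : ∀ i ∈ s, x + c i = x) : x + ∑ i ∈ s, c i = x :=
  Finset.sum_induction c (fun y => x + y = x)
    (fun a b ha hb => by rw [← add_assoc, ha, hb]) (add_zero x) h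

theorem add_eq_self_of_eq_add_of_add_eq_self {a b c d : M} (hab : a = b + d) (hb : b + c = b) :
    a + c = a := by
  rw [hab, add_right_comm, hb]

theorem eq_add_sum_Ico_of_forall_eq_add {a d : ℕ → M} {T : ℕ}
    (h : ∀ t, t + 1 ≤ T → a t = a (t + 1) + d t) {t s : ℕ} (hts : t ≤ s) (hsT : s ≤ T) :
    a t = a s + ∑ τ ∈ Finset.Ico t s, d τ := by
  induction s, hts using Nat.le_induction with
  | base => simp
  | succ s hts ih =>
    rw [ih (by omega), h s hsT, Finset.sum_Ico_succ_top hts, add_assoc, add_comm (d s)]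

end AddCommMonoid

namespace Set

theorem add_eq_self_of_subset_of_add_eq_self {V : Type*} [AddZeroClass V] {X c S : Set V}
    (h0 : (0 : V) ∈ c) (hcS : c ⊆ S) (hS : X + S = X) : X + c = X :=
  ((add_subset_add_left hcS).trans hS.subset).antisymm (subset_add_left X h0)

theorem subset_finset_sum_of_zero_mem {V ι : Type*} [AddCommMonoid V] [DecidableEq ι]
    {C : ι → Set V} {s : Finset ι} {t : ι} (ht : t ∈ s) (h0 : ∀ τ ∈ s, (0 : V) ∈ C τ) :
    C t ⊆ ∑ τ ∈ s, C τ := by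
  rw [← Finset.add_sum_erase s C ht]
  refine subset_add_left _ ?_
  simpa using finsetSum_mem_finsetSum _ C 0 fun τ hτ => h0 τ (Finset.mem_of_mem_erase hτ)

end Set

/-- if `A_t = A_{t+1} + D_t` for all `t < T`, then the following are
equivalent: (i) `A_t = A_t + C_t` for all `t`; (ii) `A_t = A_t + C_s` for all `t ≤ s`;
(iii) `A_t = A_t + Σ_{τ=t}^T C_τ` for all `t`. -/
theorem acceptance_absorption_equivalences
    {V : Type*} [AddCommGroup V] (T : ℕ) (A C D : ℕ → Set V)
    (hC0 : ∀ t ≤ T, (0 : V) ∈ C t)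
    (hAD : ∀ t, t + 1 ≤ T → A t = A (t + 1) + D t) :
    ((∀ t ≤ T, A t = A t + C t) ↔
      (∀ t ≤ T, ∀ s, t ≤ s → s ≤ T → A t = A t + C s)) ∧
    ((∀ t ≤ T, A t = A t + C t) ↔
      (∀ t ≤ T, A t = A t + ∑ τ ∈ Finset.Icc t T, C τ)) := by
  have h12 : (∀ t ≤ T, A t = A t + C t) →
      ∀ t ≤ T, ∀ s, t ≤ s → s ≤ T → A t = A t + C s := fun h t _ s hts hsT =>
    (add_eq_self_of_eq_add_of_add_eq_self (eq_add_sum_Ico_of_forall_eq_add hAD hts hsT)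
      (h s hsT).symm).symm
  have h23 : (∀ t ≤ T, ∀ s, t ≤ s → s ≤ T → A t = A t + C s) →
      ∀ t ≤ T, A t = A t + ∑ τ ∈ Finset.Icc t T, C τ := fun h t ht =>
    (add_finset_sum_eq_self fun τ hτ =>
      (h t ht τ (Finset.mem_Icc.1 hτ).1 (Finset.mem_Icc.1 hτ).2).symm).symm
  have h31 : (∀ t ≤ T, A t = A t + ∑ τ ∈ Finset.Icc t T, C τ) →
      ∀ t ≤ T, A t = A t + C t := fun h t ht =>
    (add_eq_self_of_subset_of_add_eq_self (hC0 t ht)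
      (subset_finset_sum_of_zero_mem (Finset.mem_Icc.2 ⟨le_rfl, ht⟩)
        fun τ hτ => hC0 τ (Finset.mem_Icc.1 hτ).2) (h t ht).symm).symm
  exact ⟨⟨h12, fun h t ht => h t ht t le_rfl ht⟩, ⟨fun h => h23 (h12 h), h31⟩⟩
end
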